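/- arXiv:1907.05563 — 9 statements merged into one kernel-verified Lean document; each statement's English description precedes it below -/
import Mathlib

section
/- Define sequences A and B by A(-1)=1, A(0)=2, B(-1)=0, B(0)=1, and for n≥1, A(n)=A(n-1)+(1/n)A(n-2), B(n)=B(n-1)+(1/n)B(n-2). Then A(n)=n+2 for all n≥0. -/
theorem Int.eq_of_two_step_recurrence {α : Type*} {f g : ℤ → α} (F : ℤ → α → α → α)
    (hf : ∀ n : ℤ, 1 ≤ n → f n = F n (f (n - 1)) (f (n - 2)))
    (hg : ∀ n : ℤ, 1 ≤ n → g n = F n (g (n - 1)) (g (n - 2)))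
    (h₁ : f (-1) = g (-1)) (h₀ : f 0 = g 0) :
    ∀ n : ℤ, -1 ≤ n → f n = g n := by
  have pair : ∀ n : ℤ, 0 ≤ n → f (n - 1) = g (n - 1) ∧ f n = g n := by
    intro n hn
    induction n, hn using Int.leInduction with
    | base => exact ⟨h₁, h₀⟩
    | succ n hn ih =>
      refine ⟨by simpa using ih.2, ?_⟩
      rw [hf _ (by omega), hg _ (by omega), add_sub_cancel_right, show n + 1 - 2 = n - 1 by ring,
        ih.1, ih.2]
  intro n hn
  simpa using (pair (n + 1) (by omega)).1

theorem stmt0_general (A : ℤ → ℚ)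
    (hA1 : A (-1) = 1) (hA0 : A 0 = 2)
    (hArec : ∀ n : ℤ, 1 ≤ n → A n = A (n - 1) + (1 / (n : ℚ)) * A (n - 2)) :
    ∀ n : ℤ, 0 ≤ n → A n = (n : ℚ) + 2 := by
  have hsolution : ∀ n : ℤ, 1 ≤ n →
      (n : ℚ) + 2 = ((n - 1 : ℤ) : ℚ) + 2 + (1 / (n : ℚ)) * (((n - 2 : ℤ) : ℚ) + 2) := by
    intro n hn
    have hn' : (n : ℚ) ≠ 0 := by exact_mod_cast (by omega : n ≠ 0)
    push_cast
    field_simp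
    ring
  intro n hn
  exact Int.eq_of_two_step_recurrence (fun n x y => x + (1 / (n : ℚ)) * y) hArec hsolution
    (by rw [hA1]; norm_num) (by rw [hA0]; norm_num) n (by omega)

theorem stmt0 (A B : ℤ → ℚ)
    (hA1 : A (-1) = 1) (hA0 : A 0 = 2) (hB1 : B (-1) = 0) (hB0 : B 0 = 1)
    (hArec : ∀ n : ℤ, 1 ≤ n → A n = A (n - 1) + (1 / (n : ℚ)) * A (n - 2))
    (hBrec : ∀ n : ℤ, 1 ≤ n → B n = B (n - 1) + (1 / (n : ℚ)) * B (n - 2)) :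
    ∀ n : ℤ, 0 ≤ n → A n = (n : ℚ) + 2 :=
  stmt0_general A hA1 hA0 hArec
end

section
/- Define B : ℕ → ℚ by B(-1)=0, B(0)=1, B(n)=B(n-1)+(1/n)B(n-2) for n≥1. Define k(n)=B(n-2)/n - B(n-3)/(n-1) for n≥2. Then k(n+2) = k(n)/((n+2)(n+1)) for all n≥2. -/
theorem stmt1 (B k : ℤ → ℚ)
    (hB1 : B (-1) = 0) (hB0 : B 0 = 1)
    (hBrec : ∀ n : ℤ, 1 ≤ n → B n = B (n - 1) + (1 / (n : ℚ)) * B (n - 2))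
    (hk : ∀ n : ℤ, 2 ≤ n → k n = B (n - 2) / (n : ℚ) - B (n - 3) / ((n : ℚ) - 1)) :
    ∀ n : ℤ, 2 ≤ n → k (n + 2) = k n / (((n : ℚ) + 2) * ((n : ℚ) + 1)) := by
  intro n hn
  have h1 := hk (n + 2) (by linarith)
  have h2 := hk n hn
  have h3 := hBrec n (by linarith)
  have h4 := hBrec (n - 1) (by linarith)
  have e1 : n + 2 - 2 = n := by ring
  have e2 : n + 2 - 3 = n - 1 := by ring
  have e3 : n - 1 - 1 = n - 2 := by ring
  have e4 : n - 1 - 2 = n - 3 := by ring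
  rw [e1, e2] at h1
  rw [e3, e4] at h4
  have hq : ((n : ℚ)) ≠ 0 := by
    have : (2 : ℚ) ≤ (n : ℚ) := by exact_mod_cast hn
    linarith
  have hq1 : ((n : ℚ)) - 1 ≠ 0 := by
    have : (2 : ℚ) ≤ (n : ℚ) := by exact_mod_cast hn
    linarith
  have hq2 : ((n : ℚ)) + 1 ≠ 0 := by
    have : (2 : ℚ) ≤ (n : ℚ) := by exact_mod_cast hn
    linarith
  have hq3 : ((n : ℚ)) + 2 ≠ 0 := by
    have : (2 : ℚ) ≤ (n : ℚ) := by exact_mod_cast hn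
    linarith
  rw [h1, h2, h3, h4]
  push_cast
  rw [show (n:ℚ) + 2 - 1 = (n:ℚ) + 1 from by ring]
  field_simp
  ring
end

section
/- Define B : ℕ → ℚ by B(-1)=0, B(0)=1, B(n)=B(n-1)+(1/n)B(n-2) for n≥1. Define k(n)=B(n-2)/n - B(n-3)/(n-1) for n≥2. Then k(n) = (-1)^n / n! for all n≥2. -/
/-!
Substituting `B (n - 1) = B (n - 2) + B (n - 3) / (n - 1)` into `(n + 1) k (n + 1)` leaves exactly
`-k n`, so `k (n + 1) = -k n / (n + 1)`; with `k 2 = 1 / 2` this is the recursion of `(-1)ⁿ / n!`.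
-/

open scoped Nat

section

variable {K : Type*} [Field K] [CharZero K]

theorem eq_neg_one_zpow_div_factorial_of_succ_mul_eq_neg {f : ℤ → K} {n₀ : ℤ} (hn₀ : 0 ≤ n₀)
    (hbase : f n₀ = (-1) ^ n₀ / (n₀.toNat ! : K))
    (hstep : ∀ n, n₀ ≤ n → ((n : K) + 1) * f (n + 1) = -f n) :
    ∀ n, n₀ ≤ n → f n = (-1) ^ n / (n.toNat ! : K) := by
  intro n hn
  induction n, hn using Int.leInduction with
  | base => exact hbase
  | succ n hn ih =>
    have hcast : ((n.toNat : ℕ) : K) = n := by exact_mod_cast Int.toNat_of_nonneg (hn₀.trans hn)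
    have hsucc : (n : K) + 1 ≠ 0 := by exact_mod_cast (by omega : n + 1 ≠ 0)
    have hrec : f (n + 1) = -f n / ((n : K) + 1) := by
      rw [eq_div_iff hsucc, mul_comm]
      exact hstep n hn
    rw [hrec, ih, show (n + 1).toNat = n.toNat + 1 by omega, Nat.factorial_succ,
      zpow_add_one₀ (by norm_num : (-1 : K) ≠ 0), Nat.cast_mul, Nat.cast_succ, hcast]
    field_simp

def denomDiff (B : ℤ → K) (n : ℤ) : K := B (n - 2) / n - B (n - 3) / (n - 1)

theorem succ_mul_denomDiff_succ {B : ℤ → K}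
    (hBrec : ∀ n : ℤ, 1 ≤ n → B n = B (n - 1) + 1 / (n : K) * B (n - 2)) {n : ℤ} (hn : 2 ≤ n) :
    ((n : K) + 1) * denomDiff B (n + 1) = -denomDiff B n := by
  have hrec := hBrec (n - 1) (by omega)
  rw [show n - 1 - 1 = n - 2 by ring, show n - 1 - 2 = n - 3 by ring] at hrec
  have hn0 : (n : K) ≠ 0 := by exact_mod_cast (by omega : n ≠ 0)
  have hn1 : (n : K) + 1 ≠ 0 := by exact_mod_cast (by omega : n + 1 ≠ 0)
  have hsplit : ((n : K) + 1) * (B (n - 2) / n) = B (n - 2) + B (n - 2) / n := by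
    field_simp
  simp only [denomDiff]
  rw [show n + 1 - 2 = n - 1 by ring, show n + 1 - 3 = n - 2 by ring, hrec]
  push_cast
  rw [add_sub_cancel_right, mul_sub, mul_div_cancel₀ _ hn1, hsplit]
  ring

end

theorem stmt2 (B k : ℤ → ℚ)
    (hB1 : B (-1) = 0) (hB0 : B 0 = 1)
    (hBrec : ∀ n : ℤ, 1 ≤ n → B n = B (n - 1) + (1 / (n : ℚ)) * B (n - 2))
    (hk : ∀ n : ℤ, 2 ≤ n → k n = B (n - 2) / (n : ℚ) - B (n - 3) / ((n : ℚ) - 1)) :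
    ∀ n : ℤ, 2 ≤ n → k n = (-1 : ℚ) ^ n / (n.toNat.factorial : ℚ) := by
  intro n hn
  have hbase : denomDiff B 2 = (-1) ^ (2 : ℤ) / ((2 : ℤ).toNat ! : ℚ) := by
    norm_num [denomDiff, hB0, hB1, show (2 : ℤ).toNat = 2 from rfl, Nat.factorial]
  rw [hk n hn]
  exact eq_neg_one_zpow_div_factorial_of_succ_mul_eq_neg (by norm_num) hbase
    (fun m hm => succ_mul_denomDiff_succ hBrec hm) n hn
end

section
/- Define B : ℕ → ℚ by B(-1)=0, B(0)=1, B(n)=B(n-1)+(1/n)B(n-2) for n≥1. Then B(n) = (n+2) · ∑_{i=2}^{n+2} (-1)^i / i! for all n≥0. -/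
/-!
With `D m` the number of derangements of `m` points, `B n = D (n + 2) / (n + 1)!`: the recurrence
`D (m + 2) = (m + 1) (D m + D (m + 1))`, divided by `(m + 1)!`, is exactly the recurrence of `B`,
and the initial values `D 1 = 0`, `D 2 = 1` match. The claim is then the classical formula
`D m / m! = ∑_{i ≤ m} (-1)^i / i!`, whose terms `i = 0, 1` cancel.
-/

open Finset

theorem numDerangements_div_factorial {K : Type*} [Field K] [CharZero K] (m : ℕ) :
    (numDerangements m : K) / m.factorial =
      ∑ i ∈ range (m + 1), (-1 : K) ^ i / i.factorial := by
  induction m with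
  | zero => simp
  | succ m ih =>
    have hsucc : (numDerangements (m + 1) : K) = (m + 1) * numDerangements m - (-1) ^ m := by
      exact_mod_cast numDerangements_succ m
    rw [sum_range_succ, ← ih, hsucc, Nat.factorial_succ]
    push_cast
    field_simp
    ring

theorem sum_Icc_two_neg_one_pow_div_factorial {K : Type*} [Field K] {m : ℕ} (hm : 1 ≤ m) :
    ∑ i ∈ Icc 2 m, (-1 : K) ^ i / i.factorial =
      ∑ i ∈ range (m + 1), (-1 : K) ^ i / i.factorial := by
  rw [range_eq_Ico, sum_eq_sum_Ico_succ_bot (by omega), sum_eq_sum_Ico_succ_bot (by omega),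
    Ico_add_one_right_eq_Icc]
  simp

theorem numDerangements_add_two_div_factorial {K : Type*} [Field K] [CharZero K] (m : ℕ) :
    (numDerangements (m + 3) : K) / (m + 2).factorial =
      numDerangements (m + 2) / (m + 1).factorial +
        (1 / (m + 1 : K)) * (numDerangements (m + 1) / m.factorial) := by
  have h₀ : (m.factorial : K) ≠ 0 := by exact_mod_cast m.factorial_ne_zero
  have h₁ : (m + 1 + 1 : K) ≠ 0 := by exact_mod_cast Nat.succ_ne_zero (m + 1)
  rw [numDerangements_add_two, Nat.factorial_succ (m + 1), Nat.factorial_succ m]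
  push_cast
  field_simp
  ring

theorem stmt3 (B : ℤ → ℚ)
    (hB1 : B (-1) = 0) (hB0 : B 0 = 1)
    (hBrec : ∀ n : ℤ, 1 ≤ n → B n = B (n - 1) + (1 / (n : ℚ)) * B (n - 2)) :
    ∀ n : ℕ, B (n : ℤ) = ((n : ℚ) + 2) *
      ∑ i ∈ Finset.Icc 2 (n + 2), (-1 : ℚ) ^ i / (Nat.factorial i : ℚ) := by
  have hB : ∀ m : ℕ, B ((m : ℤ) - 1) = numDerangements (m + 1) / m.factorial := by
    intro m
    induction m using Nat.twoStepInduction with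
    | zero => simpa using hB1
    | one => simpa [numDerangements_add_two] using hB0
    | more m ih₀ ih₁ =>
      have h := hBrec (m + 1) (by omega)
      rw [Nat.cast_succ, add_sub_cancel_right] at ih₁
      rw [show ((m + 1 : ℤ) - 2) = (m : ℤ) - 1 by ring, add_sub_cancel_right, ih₀, ih₁] at h
      push_cast at h ⊢
      rw [show (m : ℤ) + 2 - 1 = m + 1 by ring, h, numDerangements_add_two_div_factorial]
  intro n
  calc B n = numDerangements (n + 2) / (n + 1).factorial := by simpa using hB (n + 1)
    _ = (n + 2) * (numDerangements (n + 2) / (n + 2).factorial) := by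
      rw [Nat.factorial_succ (n + 1)]
      push_cast
      field_simp
      ring
    _ = _ := by
      rw [numDerangements_div_factorial, sum_Icc_two_neg_one_pow_div_factorial (by omega)]
end

section
/- Define B : ℕ → ℤ by B(-1)=0, B(0)=1, and B(n)=(n+3)B(n-1) - n·B(n-2) for n≥1. Then B(n) = ((n+1)^2 / n) · B(n-1) for all n≥1 (equivalently n·B(n) = (n+1)^2·B(n-1)). -/
/-! Multiplying the recurrence at `n + 1` by `n + 1` and substituting `n B(n) = (n+1)² B(n-1)`
for the last term leaves `(n+1)(n+4) - n = (n+2)²` as the coefficient of `B(n)`, so the identity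
propagates upwards. It already holds at `n = 0`, where both sides vanish because `B(-1) = 0`. -/

theorem succ_mul_eq_sq_mul_of_recurrence {R : Type*} [CommRing R] (n a b c : R)
    (hrec : c = (n + 4) * b - (n + 1) * a) (ih : n * b = (n + 1) ^ 2 * a) :
    (n + 1) * c = (n + 2) ^ 2 * b := by
  linear_combination (n + 1) * hrec + ih

theorem stmt6_general (B : ℤ → ℤ)
    (hB1 : B (-1) = 0)
    (hBrec : ∀ n : ℤ, 1 ≤ n → B n = (n + 3) * B (n - 1) - n * B (n - 2)) :
    ∀ n : ℤ, 1 ≤ n → n * B n = (n + 1) ^ 2 * B (n - 1) := by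
  suffices h : ∀ n : ℤ, 0 ≤ n → n * B n = (n + 1) ^ 2 * B (n - 1) from
    fun n hn => h n (by omega)
  intro n hn
  induction n, hn using Int.leInduction with
  | base => simp [hB1]
  | succ n hn ih =>
    have hrec := hBrec (n + 1) (by omega)
    rw [add_sub_cancel_right, show n + 1 - 2 = n - 1 by ring, add_assoc] at hrec
    rw [add_sub_cancel_right, add_assoc]
    exact succ_mul_eq_sq_mul_of_recurrence n (B (n - 1)) (B n) (B (n + 1)) hrec ih

theorem stmt6 (B : ℤ → ℤ)
    (hB1 : B (-1) = 0) (hB0 : B 0 = 1)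
    (hBrec : ∀ n : ℤ, 1 ≤ n → B n = (n + 3) * B (n - 1) - n * B (n - 2)) :
    ∀ n : ℤ, 1 ≤ n → n * B n = (n + 1) ^ 2 * B (n - 1) :=
  stmt6_general B hB1 hBrec
end

section
/- Define A : ℕ → ℤ by A(-1)=1, A(0)=3, and A(n)=(n+3)A(n-1) - n·A(n-2) for n≥1. Then A(n) = ∑_{k=0}^{n+1} (k+1)! · C(n+1, k) for all n≥1. -/
/-!
With `e m = ∑_{k ≤ m} m! / (m - k)!` (the number of arrangements of subsets of an `m`-set),
the sum `∑_{k ≤ m} (k + 1)! C(m, k)` equals `m * e m + 1`, and `e` satisfies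
`e (m + 1) = (m + 1) * e m + 1`. Substituting this closed form, the three-term recurrence for
`A` becomes a polynomial identity in `n` and `e n`, so `A (n - 1) = n * e n + 1` follows by
two-step induction from `A (-1) = 1` and `A 0 = 3`.
-/

open Finset Nat

def arrangements (m : ℕ) : ℕ := ∑ k ∈ range (m + 1), m.descFactorial k

lemma arrangements_succ (m : ℕ) : arrangements (m + 1) = (m + 1) * arrangements m + 1 := by
  simp only [arrangements, sum_range_succ' _ (m + 1), Nat.succ_descFactorial_succ, ← mul_sum,
    Nat.descFactorial_zero]

lemma sum_range_descFactorial_succ_add_one (m : ℕ) :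
    ∑ k ∈ range (m + 1), m.descFactorial (k + 1) + 1 = arrangements m := by
  have h := sum_range_succ' (fun k => m.descFactorial k) (m + 1)
  rw [sum_range_succ, Nat.descFactorial_of_lt (Nat.lt_succ_self m)] at h
  simpa [arrangements] using h.symm

lemma sum_factorial_succ_mul_choose (m : ℕ) :
    ∑ k ∈ range (m + 1), (k + 1)! * m.choose k = m * arrangements m + 1 := by
  have hsplit : ∀ k ∈ range (m + 1), (k + 1) * m.descFactorial k + m.descFactorial (k + 1)
      = (m + 1) * m.descFactorial k := by
    intro k hk
    rw [Nat.descFactorial_succ, ← add_mul]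
    congr 1
    have := mem_range.1 hk
    omega
  have htotal := sum_congr rfl hsplit
  rw [sum_add_distrib, ← mul_sum, ← arrangements] at htotal
  have hshift := sum_range_descFactorial_succ_add_one m
  simp only [Nat.factorial_succ, mul_assoc, ← Nat.descFactorial_eq_factorial_mul_choose]
  linarith

theorem stmt8 (A : ℤ → ℤ)
    (hA1 : A (-1) = 1) (hA0 : A 0 = 3)
    (hArec : ∀ n : ℤ, 1 ≤ n → A n = (n + 3) * A (n - 1) - n * A (n - 2)) :
    ∀ n : ℕ, 1 ≤ n → A (n : ℤ) =
      ∑ k ∈ Finset.range (n + 2), (Nat.factorial (k + 1) : ℤ) * (Nat.choose (n + 1) k : ℤ) := by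
  have closed : ∀ n : ℕ, A (n - 1) = n * arrangements n + 1 ∧
      A n = (n + 1) * arrangements (n + 1) + 1 := by
    intro n
    induction n with
    | zero => simp [hA1, hA0, arrangements, sum_range_succ]
    | succ n ih =>
      refine ⟨by simpa using ih.2, ?_⟩
      have hrec := hArec (n + 1) (by omega)
      rw [add_sub_cancel_right, show (n : ℤ) + 1 - 2 = n - 1 by ring, ih.1, ih.2] at hrec
      push_cast [hrec, arrangements_succ]
      ring
  intro n _
  rw [(closed n).2]
  exact_mod_cast (sum_factorial_succ_mul_choose (n + 1)).symm
end

section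
/- The sequence v(n) = ∑_{k=0}^{n+1} (n+2-k) / ((n+1) · k!) converges to e as n → ∞. -/
/-!
Splitting `n + 2 - k = (n + 1) + (1 - k)` writes `v n` as the partial sum `∑_{k ≤ n+1} 1/k!` of the
exponential series at `1`, plus `(n + 1)⁻¹ ∑_{k ≤ n+1} (1 - k)/k!`. The latter sum telescopes to
`1/(n+1)!`, since `(1 - k)/k! = 1/k! - 1/(k-1)!`, so the correction term tends to `0`.
-/

open Filter Finset Topology Nat

lemma sum_range_one_sub_div_factorial (m : ℕ) :
    ∑ k ∈ range (m + 1), (1 - k : ℝ) / k ! = 1 / m ! := by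
  induction m with
  | zero => simp
  | succ m ih =>
    rw [sum_range_succ, ih, factorial_succ]
    push_cast
    field_simp
    ring

lemma sum_range_add_two_div_mul_factorial (n : ℕ) :
    ∑ k ∈ range (n + 2), ((n : ℝ) + 2 - k) / ((n + 1) * k !)
      = ∑ k ∈ range (n + 2), 1 / (k ! : ℝ) + 1 / ((n + 1) * (n + 1)! : ℝ) := by
  have hsplit : ∀ k : ℕ, ((n : ℝ) + 2 - k) / ((n + 1) * k !)
      = 1 / (k ! : ℝ) + (1 - k : ℝ) / k ! / (n + 1) := by
    intro k
    field_simp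
    ring
  simp only [hsplit, sum_add_distrib, ← sum_div, sum_range_one_sub_div_factorial (n + 1)]
  rw [div_div, mul_comm]

lemma tendsto_sum_range_one_div_factorial :
    Tendsto (fun n => ∑ k ∈ range n, 1 / (k ! : ℝ)) atTop (𝓝 (Real.exp 1)) := by
  have h := NormedSpace.expSeries_div_hasSum_exp (1 : ℝ)
  simp only [one_pow, ← Real.exp_eq_exp_ℝ] at h
  exact h.tendsto_sum_nat

lemma tendsto_one_div_mul_factorial :
    Tendsto (fun n : ℕ => 1 / ((n + 1) * (n + 1)! : ℝ)) atTop (𝓝 0) := by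
  refine squeeze_zero (fun n => by positivity) (fun n => ?_) tendsto_one_div_add_atTop_nhds_zero_nat
  gcongr
  exact le_mul_of_one_le_right (by positivity) (by exact_mod_cast (n + 1).factorial_pos)

theorem stmt11 :
    Filter.Tendsto (fun n : ℕ =>
      ∑ k ∈ Finset.range (n + 2), ((n : ℝ) + 2 - (k : ℝ)) /
        (((n : ℝ) + 1) * (Nat.factorial k : ℝ)))
      Filter.atTop (nhds (Real.exp 1)) := by
  simp only [sum_range_add_two_div_mul_factorial]
  simpa using (tendsto_sum_range_one_div_factorial.comp (tendsto_add_atTop_nat 2)).add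
    tendsto_one_div_mul_factorial
end

section
/- Define A, B : ℕ → ℤ by A(-1)=1, A(0)=3, B(-1)=0, B(0)=1, and A(n)=(n+3)A(n-1)-n·A(n-2), B(n)=(n+3)B(n-1)-n·B(n-2) for n≥1. Then the sequence A(n)/B(n) (as real numbers) converges to e. -/
/-!
Shifting the index by one, `u k = A (k - 1)` and `v k = B (k - 1)` solve
`w (k + 2) = (k + 4) w (k + 1) - (k + 1) w k` with initial values `(1, 3)` and `(0, 1)`.
The closed forms `v k = k * k!` and `u k = k * k! * e_k + 1`, where `e_k = ∑_{j ≤ k} 1/j!`,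
satisfy this recurrence, so `A n / B n = e_{n+1} + 1 / ((n + 1) * (n + 1)!)`, which tends to
`exp 1 + 0`.
-/

open Filter Finset Nat
open scoped Topology

theorem eq_of_two_step_recurrence {R : Type*} [Semiring R] {u v : ℕ → R} (p q : ℕ → R)
    (h0 : u 0 = v 0) (h1 : u 1 = v 1)
    (hu : ∀ k, u (k + 2) = p k * u (k + 1) + q k * u k)
    (hv : ∀ k, v (k + 2) = p k * v (k + 1) + q k * v k) : u = v := by
  funext k
  induction k using Nat.twoStepInduction with
  | zero => exact h0
  | one => exact h1
  | more k hk hk1 => rw [hu, hv, hk, hk1]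

lemma shifted_recurrence (A : ℤ → ℤ)
    (hrec : ∀ n : ℤ, 1 ≤ n → A n = (n + 3) * A (n - 1) - n * A (n - 2)) (k : ℕ) :
    (A ((k + 2 : ℕ) - 1) : ℝ) =
      ((k : ℝ) + 4) * A ((k + 1 : ℕ) - 1) + (-((k : ℝ) + 1)) * A ((k : ℕ) - 1) := by
  have h := hrec (k + 1) (by omega)
  push_cast
  rw [show (k : ℤ) + 2 - 1 = k + 1 by ring, h, show (k : ℤ) + 1 - 2 = k - 1 by ring]
  push_cast
  ring

noncomputable def expPartialSum (k : ℕ) : ℝ :=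
  ∑ j ∈ range (k + 1), 1 / (j ! : ℝ)

lemma expPartialSum_succ (k : ℕ) :
    expPartialSum (k + 1) = expPartialSum k + 1 / ((k + 1)! : ℝ) :=
  sum_range_succ _ _

lemma tendsto_expPartialSum : Tendsto expPartialSum atTop (𝓝 (Real.exp 1)) := by
  refine (tendsto_add_atTop_iff_nat (f := fun k ↦ ∑ j ∈ range k, 1 / (j ! : ℝ)) 1).mpr ?_
  have h := (NormedSpace.expSeries_div_hasSum_exp (1 : ℝ)).tendsto_sum_nat
  simpa only [one_pow, ← Real.exp_eq_exp_ℝ] using h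

noncomputable def cfDen (k : ℕ) : ℝ := k * k !

noncomputable def cfNum (k : ℕ) : ℝ := cfDen k * expPartialSum k + 1

lemma cfDen_recurrence (k : ℕ) :
    cfDen (k + 2) = ((k : ℝ) + 4) * cfDen (k + 1) + (-((k : ℝ) + 1)) * cfDen k := by
  simp only [cfDen, factorial_succ]
  push_cast
  ring

lemma cfNum_recurrence (k : ℕ) :
    cfNum (k + 2) = ((k : ℝ) + 4) * cfNum (k + 1) + (-((k : ℝ) + 1)) * cfNum k := by
  simp only [cfNum, cfDen, expPartialSum_succ, factorial_succ]
  have : (k ! : ℝ) ≠ 0 := by positivity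
  push_cast
  field_simp
  ring

lemma cfNum_div_cfDen {k : ℕ} (hk : k ≠ 0) :
    cfNum k / cfDen k = expPartialSum k + (cfDen k)⁻¹ := by
  have : cfDen k ≠ 0 := by unfold cfDen; positivity
  rw [cfNum, add_div, mul_div_cancel_left₀ _ this, one_div]

lemma tendsto_cfDen_atTop : Tendsto cfDen atTop atTop := by
  refine tendsto_atTop_mono (fun k ↦ ?_) tendsto_natCast_atTop_atTop
  exact le_mul_of_one_le_right k.cast_nonneg (by exact_mod_cast k.factorial_pos)

lemma tendsto_cfNum_div_cfDen :
    Tendsto (fun k ↦ cfNum k / cfDen k) atTop (𝓝 (Real.exp 1)) := by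
  have h := tendsto_expPartialSum.add tendsto_cfDen_atTop.inv_tendsto_atTop
  rw [add_zero] at h
  refine h.congr' ?_
  filter_upwards [eventually_ne_atTop 0] with k hk
  exact (cfNum_div_cfDen hk).symm

theorem stmt13 (A B : ℤ → ℤ)
    (hA1 : A (-1) = 1) (hA0 : A 0 = 3) (hB1 : B (-1) = 0) (hB0 : B 0 = 1)
    (hArec : ∀ n : ℤ, 1 ≤ n → A n = (n + 3) * A (n - 1) - n * A (n - 2))
    (hBrec : ∀ n : ℤ, 1 ≤ n → B n = (n + 3) * B (n - 1) - n * B (n - 2)) :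
    Filter.Tendsto (fun n : ℕ => (A (n : ℤ) : ℝ) / (B (n : ℤ) : ℝ))
      Filter.atTop (nhds (Real.exp 1)) := by
  have hA : (fun k : ℕ ↦ (A (k - 1) : ℝ)) = cfNum :=
    eq_of_two_step_recurrence _ _ (by simp [hA1, cfNum, cfDen])
      (by norm_num [hA0, cfNum, cfDen, expPartialSum, sum_range_succ])
      (shifted_recurrence A hArec) cfNum_recurrence
  have hB : (fun k : ℕ ↦ (B (k - 1) : ℝ)) = cfDen :=
    eq_of_two_step_recurrence _ _ (by simp [hB1, cfDen]) (by simp [hB0, cfDen])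
      (shifted_recurrence B hBrec) cfDen_recurrence
  refine ((tendsto_add_atTop_iff_nat 1).mpr tendsto_cfNum_div_cfDen).congr fun n ↦ ?_
  rw [← hA, ← hB]
  push_cast
  rw [add_sub_cancel_right]
end

section
/- Define A, B : ℕ → ℚ by A(-1)=1, A(0)=2, B(-1)=0, B(0)=1, and A(n)=A(n-1)+(1/n)A(n-2), B(n)=B(n-1)+(1/n)B(n-2) for n≥1. Then the sequence A(n)/B(n) (as real numbers) converges to e. -/
/-!
Multiplying the recurrence `u n = u (n - 1) + u (n - 2) / n` by `(n + 1)!` turns it into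
`x (n + 2) = (n + 1) * (x n + x (n + 1))` for `x (n + 1) = n ! * u (n - 1)`, which is the
recurrence of both `n !` and the derangement numbers `d n`. Matching initial values gives
`A n = (n + 2)! / (n + 1)!` and `B n = d (n + 2) / (n + 1)!`, so `A n / B n = (n + 2)! / d (n + 2)`,
and this tends to `e` because `d n / n !` tends to `e⁻¹`.
-/

open Filter Topology Nat

theorem eq_div_factorial_of_recurrence {u : ℤ → ℚ} {x : ℕ → ℚ}
    (hu : ∀ n : ℤ, 1 ≤ n → u n = u (n - 1) + (1 / (n : ℚ)) * u (n - 2))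
    (hx : ∀ n : ℕ, x (n + 2) = (n + 1) * (x n + x (n + 1)))
    (h₁ : u (-1) = x 1) (h₂ : u 0 = x 2) (n : ℕ) : u n = x (n + 2) / (n + 1)! := by
  suffices h : ∀ n : ℕ, u ((n : ℤ) - 1) = x (n + 1) / n ! ∧ u n = x (n + 2) / (n + 1)! from
    (h n).2
  intro n
  induction n with
  | zero => simp [h₁, h₂]
  | succ n ih =>
    refine ⟨by simpa using ih.2, ?_⟩
    have hrec := hu (n + 1) (by omega)
    rw [add_sub_cancel_right, show (n : ℤ) + 1 - 2 = n - 1 by ring] at hrec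
    push_cast
    rw [hrec, ih.1, ih.2, hx (n + 1), factorial_succ (n + 1), factorial_succ n]
    push_cast
    field_simp
    ring

theorem cast_factorial_add_two (n : ℕ) : ((n + 2)! : ℚ) = (n + 1) * (n ! + (n + 1)!) := by
  push_cast [factorial_succ]
  ring

theorem tendsto_factorial_div_numDerangements :
    Tendsto (fun n => (n ! : ℝ) / numDerangements n) atTop (𝓝 (Real.exp 1)) := by
  have h := numDerangements_tendsto_inv_e.inv₀ (Real.exp_ne_zero _)
  simpa only [inv_div, Real.exp_neg, inv_inv] using h

theorem stmt14 (A B : ℤ → ℚ)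
    (hA1 : A (-1) = 1) (hA0 : A 0 = 2) (hB1 : B (-1) = 0) (hB0 : B 0 = 1)
    (hArec : ∀ n : ℤ, 1 ≤ n → A n = A (n - 1) + (1 / (n : ℚ)) * A (n - 2))
    (hBrec : ∀ n : ℤ, 1 ≤ n → B n = B (n - 1) + (1 / (n : ℚ)) * B (n - 2)) :
    Filter.Tendsto (fun n : ℕ => ((A (n : ℤ) : ℝ) / (B (n : ℤ) : ℝ)))
      Filter.atTop (nhds (Real.exp 1)) := by
  have hA := eq_div_factorial_of_recurrence (x := fun n => (n ! : ℚ)) hArec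
    cast_factorial_add_two (by simp [hA1]) (by simp [hA0])
  have hB := eq_div_factorial_of_recurrence (x := fun n => (numDerangements n : ℚ)) hBrec
    (fun n => by exact_mod_cast numDerangements_add_two n) (by simp [hB1]) (by simp [hB0, numDerangements_add_two])
  have hratio : ∀ n : ℕ, ((A n : ℝ) / (B n : ℝ)) = ((n + 2)! : ℝ) / numDerangements (n + 2) := by
    intro n
    rw [← Rat.cast_div, hA, hB, div_div_div_cancel_right₀ (by positivity)]
    push_cast
    rfl
  simp_rw [hratio]
  exact (tendsto_add_atTop_iff_nat 2).mpr tendsto_factorial_div_numDerangements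
end
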